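/- arXiv:2003.10988 — 3 statements merged into one kernel-verified Lean document; each statement's English description precedes it below -/
import Mathlib

section
/- Let f ∈ F_q[t][x] be a polynomial of degree at most d. Then there exists α ∈ F_q[t] with deg α ≤ log_q d (i.e. |α| ≤ d, where |α| = q^{deg α}) such that |f(α)| ≥ ‖f‖, where ‖f‖ denotes the maximum of the norms of the coefficients of f. -/
open Polynomial

open Classical in
/-- The norm `|a| = q^(deg a)` on `F_q[t]`, with `|0| = 0`. -/
noncomputable def pnorm {Fq : Type*} [Field Fq] (q : ℕ) (a : Polynomial Fq) : ℝ :=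
  if a = 0 then 0 else (q : ℝ) ^ a.natDegree

section lemmas
variable {Fq : Type*} [Field Fq] {q : ℕ}

lemma pnorm_zero : pnorm q (0 : Polynomial Fq) = 0 := by simp [pnorm]

lemma pnorm_nonneg (a : Polynomial Fq) : 0 ≤ pnorm q a := by
  unfold pnorm; split_ifs
  · exact le_refl _
  · positivity

lemma pnorm_one : pnorm q (1 : Polynomial Fq) = 1 := by
  simp [pnorm]

lemma pnorm_mul (a b : Polynomial Fq) : pnorm q (a * b) = pnorm q a * pnorm q b := by
  unfold pnorm
  rcases eq_or_ne a 0 with rfl | ha; · simp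
  rcases eq_or_ne b 0 with rfl | hb; · simp
  rw [if_neg (mul_ne_zero ha hb), if_neg ha, if_neg hb, natDegree_mul ha hb, pow_add]

lemma pnorm_neg (a : Polynomial Fq) : pnorm q (-a) = pnorm q a := by
  unfold pnorm
  rcases eq_or_ne a 0 with rfl | ha
  · simp
  · rw [if_neg ha, if_neg (neg_ne_zero.2 ha), natDegree_neg]

lemma pnorm_add_le (hq : 1 ≤ q) (a b : Polynomial Fq) :
    pnorm q (a + b) ≤ max (pnorm q a) (pnorm q b) := by
  have hq1 : (1:ℝ) ≤ (q:ℝ) := by exact_mod_cast hq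
  rcases eq_or_ne a 0 with rfl | ha; · simp only [zero_add]; exact le_max_right _ _
  rcases eq_or_ne b 0 with rfl | hb; · simp only [add_zero]; exact le_max_left _ _
  unfold pnorm
  rcases eq_or_ne (a+b) 0 with h | h
  · rw [if_pos h, if_neg ha, if_neg hb]
    simp only [le_max_iff]; left; positivity
  · rw [if_neg h, if_neg ha, if_neg hb]
    rcases le_total a.natDegree b.natDegree with hab | hab
    · refine le_max_of_le_right ?_
      exact pow_le_pow_right₀ hq1 ((natDegree_add_le a b).trans (by omega))
    · refine le_max_of_le_left ?_
      exact pow_le_pow_right₀ hq1 ((natDegree_add_le a b).trans (by omega))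

lemma pnorm_sub_le (hq : 1 ≤ q) (a b : Polynomial Fq) :
    pnorm q (a - b) ≤ max (pnorm q a) (pnorm q b) := by
  rw [sub_eq_add_neg]
  simpa [pnorm_neg] using pnorm_add_le hq a (-b)

lemma pnorm_sum_le (hq : 1 ≤ q) {ι : Type*} (s : Finset ι) (g : ι → Polynomial Fq)
    {B : ℝ} (hB : 0 ≤ B) (h : ∀ i ∈ s, pnorm q (g i) ≤ B) :
    pnorm q (∑ i ∈ s, g i) ≤ B := by
  classical
  induction s using Finset.induction_on with
  | empty => simpa [pnorm_zero] using hB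
  | @insert x s' hx ih =>
    rw [Finset.sum_insert hx]
    refine (pnorm_add_le hq _ _).trans (max_le (h x (by simp)) (ih fun i hi => h i (by simp [hi])))

lemma pnorm_prod {ι : Type*} (s : Finset ι) (g : ι → Polynomial Fq) :
    pnorm q (∏ i ∈ s, g i) = ∏ i ∈ s, pnorm q (g i) := by
  classical
  induction s using Finset.induction_on with
  | empty => simp [pnorm_one]
  | @insert x s' hx ih => rw [Finset.prod_insert hx, Finset.prod_insert hx, pnorm_mul, ih]

end lemmas

section key
variable {Fq : Type*} [Field Fq] {q : ℕ}

lemma pnorm_coeff_prod_le (hq : 1 ≤ q) (S : Finset (Polynomial Fq)) (i : ℕ) :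
    pnorm q ((∏ β ∈ S, (X - C β)).coeff i) ≤ ∏ β ∈ S, max 1 (pnorm q β) := by
  classical
  induction S using Finset.induction_on generalizing i with
  | empty =>
    simp only [Finset.prod_empty]
    rcases eq_or_ne i 0 with rfl | hi
    · simp [coeff_one, pnorm_one]
    · simp [coeff_one, hi, pnorm_zero]
  | @insert β S' hβ ih =>
    rw [Finset.prod_insert hβ, Finset.prod_insert hβ]
    set P := ∏ b ∈ S', (X - C b) with hPdef
    have hnn : (0:ℝ) ≤ ∏ b ∈ S', max 1 (pnorm q b) :=
      Finset.prod_nonneg fun b _ => le_trans zero_le_one (le_max_left _ _)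
    have h1 : (1:ℝ) ≤ max 1 (pnorm q β) := le_max_left _ _
    have key : ∀ j, pnorm q ((X * P).coeff j) ≤ ∏ b ∈ S', max 1 (pnorm q b) := by
      intro j
      cases j with
      | zero => rw [mul_coeff_zero, coeff_X_zero, zero_mul, pnorm_zero]; exact hnn
      | succ n => rw [coeff_X_mul]; exact ih n
    have expand : ((X - C β) * P).coeff i = (X * P).coeff i - β * P.coeff i := by
      rw [sub_mul, coeff_sub, coeff_C_mul]
    rw [expand]
    refine (pnorm_sub_le hq _ _).trans (max_le ?_ ?_)
    · exact (key i).trans (le_mul_of_one_le_left hnn h1)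
    · rw [pnorm_mul]
      exact mul_le_mul (le_max_right _ _) (ih i) (pnorm_nonneg _) (le_trans zero_le_one h1)

open Classical in
lemma interp (V : Finset (Polynomial Fq)) (h0 : (0:Polynomial Fq) ∈ V)
    (hsub : ∀ a ∈ V, ∀ b ∈ V, a - b ∈ V)
    (f : Polynomial (Polynomial Fq)) (hf : f.natDegree < V.card) :
    C (∏ γ ∈ V.erase 0, γ) * f
      = ∑ α ∈ V, C (f.eval α) * ∏ β ∈ V.erase α, (X - C β) := by
  classical
  set Δ := ∏ γ ∈ V.erase 0, γ with hΔ
  set R := ∑ α ∈ V, C (f.eval α) * ∏ β ∈ V.erase α, (X - C β) with hR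
  have hprodΔ : ∀ α ∈ V, ∏ β ∈ V.erase α, (α - β) = Δ := by
    intro α hα
    rw [hΔ]
    refine Finset.prod_nbij' (fun β => α - β) (fun γ => α - γ) ?_ ?_ ?_ ?_ ?_
    · intro β hβ
      rw [Finset.mem_erase] at hβ ⊢
      exact ⟨sub_ne_zero.2 fun h => hβ.1 h.symm, hsub α hα β hβ.2⟩
    · intro γ hγ
      rw [Finset.mem_erase] at hγ ⊢
      refine ⟨fun h => hγ.1 ?_, hsub α hα γ hγ.2⟩
      · have : α - γ = α := h; have := sub_eq_self.mp this; simpa using this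
    · intro β _; ring
    · intro γ _; ring
    · intro β _; rfl
  have heval : ∀ x ∈ V, R.eval x = Δ * f.eval x := by
    intro x hx
    rw [hR, eval_finset_sum]
    rw [Finset.sum_eq_single x]
    · rw [eval_mul, eval_C, eval_prod]
      have : ∀ β ∈ V.erase x, (X - C β).eval x = x - β := by
        intro β _; simp
      rw [Finset.prod_congr rfl this, hprodΔ x hx, mul_comm]
    · intro α hα hne
      rw [eval_mul, eval_prod]
      have hmem : x ∈ V.erase α := Finset.mem_erase.2 ⟨hne.symm, hx⟩
      rw [Finset.prod_eq_zero hmem (by simp), mul_zero]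
    · intro h; exact absurd hx h
  have hdeg : (C Δ * f - R).natDegree < V.card := by
    have hcard : 0 < V.card := Finset.card_pos.2 ⟨0, h0⟩
    have h1 : (C Δ * f).natDegree ≤ f.natDegree := natDegree_C_mul_le Δ f
    have h2 : R.natDegree ≤ V.card - 1 := by
      rw [hR]
      refine natDegree_sum_le_of_forall_le _ _ ?_
      intro α hα
      refine (natDegree_C_mul_le _ _).trans ((natDegree_prod_le _ _).trans ?_)
      calc ∑ β ∈ V.erase α, (X - C β).natDegree
          ≤ ∑ _β ∈ V.erase α, 1 := by
            exact Finset.sum_le_sum fun β _ => le_of_eq (natDegree_X_sub_C β)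
        _ = (V.erase α).card := by simp
        _ ≤ V.card - 1 := le_of_eq (Finset.card_erase_of_mem hα)
    refine lt_of_le_of_lt ((natDegree_sub_le _ _).trans (max_le_max h1 h2)) ?_
    exact max_lt hf (by omega)
  have hzero : C Δ * f - R = 0 :=
    Polynomial.eq_zero_of_natDegree_lt_card_of_eval_eq_zero' _ V
      (fun x hx => by rw [eval_sub, eval_mul, eval_C, heval x hx, sub_self]) hdeg
  exact sub_eq_zero.mp hzero

end key

lemma pnorm_one_le {Fq : Type*} [Field Fq] {q : ℕ} (hq : 1 ≤ q) {a : Polynomial Fq}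
    (ha : a ≠ 0) : 1 ≤ pnorm q a := by
  unfold pnorm
  rw [if_neg ha]
  exact one_le_pow₀ (by exact_mod_cast hq)

lemma pnorm_pos {Fq : Type*} [Field Fq] {q : ℕ} (hq : 1 ≤ q) {a : Polynomial Fq}
    (ha : a ≠ 0) : 0 < pnorm q a := lt_of_lt_of_le one_pos (pnorm_one_le hq ha)


/-- For `f ∈ F_q[t][x]` of degree at most `d`, there is `α ∈ F_q[t]` with `|α| ≤ d`
such that `|f(α)| ≥ ‖f‖`, where `‖f‖` is the maximum norm of the coefficients of `f`. -/
theorem stmt0 {Fq : Type*} [Field Fq] [Fintype Fq] (q : ℕ) (hq : Fintype.card Fq = q)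
    (d : ℕ) (hd : 0 < d) (f : Polynomial (Polynomial Fq)) (hf : f.natDegree ≤ d) :
    ∃ α : Polynomial Fq, pnorm q α ≤ d ∧
      ∀ i : ℕ, pnorm q (f.coeff i) ≤ pnorm q (f.eval α) := by
  classical
  have hq2 : 2 ≤ q := by rw [← hq]; exact Fintype.one_lt_card
  have hq1 : 1 ≤ q := by omega
  have hqR1 : (1:ℝ) ≤ (q:ℝ) := by exact_mod_cast hq1
  set L := Nat.log q d with hL
  set k := L + 1 with hk
  haveI : Fintype (Polynomial.degreeLT Fq k) :=
    Fintype.ofEquiv _ (Polynomial.degreeLTEquiv Fq k).toEquiv.symm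
  set V : Finset (Polynomial Fq) :=
    Finset.image (fun v : Polynomial.degreeLT Fq k => (v : Polynomial Fq)) Finset.univ with hV
  have hmemV : ∀ a : Polynomial Fq, a ∈ V ↔ a.degree < (k : ℕ) := by
    intro a
    rw [hV]
    simp only [Finset.mem_image, Finset.mem_univ, true_and]
    constructor
    · rintro ⟨v, rfl⟩; exact Polynomial.mem_degreeLT.mp v.2
    · intro h; exact ⟨⟨a, Polynomial.mem_degreeLT.mpr h⟩, rfl⟩
  have hcardV : V.card = q ^ k := by
    rw [hV, Finset.card_image_of_injective _ Subtype.val_injective, Finset.card_univ]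
    calc Fintype.card (Polynomial.degreeLT Fq k)
        = Fintype.card (Fin k → Fq) :=
          Fintype.card_congr (Polynomial.degreeLTEquiv Fq k).toEquiv
      _ = Fintype.card Fq ^ k := by
          rw [Fintype.card_fun]; simp
      _ = q ^ k := by rw [hq]
  have h0V : (0 : Polynomial Fq) ∈ V := by
    rw [hmemV]; rw [degree_zero]; exact WithBot.bot_lt_coe k
  have hsubV : ∀ a ∈ V, ∀ b ∈ V, a - b ∈ V := by
    intro a ha b hb
    rw [hmemV] at *
    exact lt_of_le_of_lt (degree_sub_le a b) (max_lt ha hb)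
  have hfV : f.natDegree < V.card := by
    rw [hcardV]
    exact lt_of_le_of_lt hf (Nat.lt_pow_succ_log_self (by omega) d)
  -- interpolation identity
  have hid := interp V h0V hsubV f hfV
  set Δ := ∏ γ ∈ V.erase 0, γ with hΔ
  have hΔne : Δ ≠ 0 := by
    rw [hΔ]
    exact Finset.prod_ne_zero_iff.mpr fun γ hγ => (Finset.mem_erase.mp hγ).1
  have hΔpos : 0 < pnorm q Δ := pnorm_pos hq1 hΔne
  -- the product bound
  have hΔbound : ∀ α ∈ V, (∏ β ∈ V.erase α, max 1 (pnorm q β)) ≤ pnorm q Δ := by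
    intro α hα
    have h1 : ∀ s : Finset (Polynomial Fq),
        (0:ℝ) ≤ ∏ β ∈ s, max 1 (pnorm q β) :=
      fun s => Finset.prod_nonneg fun b _ => le_trans zero_le_one (le_max_left _ _)
    have step1 : (∏ β ∈ V.erase α, max 1 (pnorm q β)) ≤ ∏ β ∈ V, max 1 (pnorm q β) := by
      rw [← Finset.mul_prod_erase V _ hα]
      exact le_mul_of_one_le_left (h1 _) (le_max_left _ _)
    have step2 : (∏ β ∈ V, max 1 (pnorm q β)) = pnorm q Δ := by
      rw [← Finset.mul_prod_erase V _ h0V, pnorm_zero]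
      rw [hΔ, pnorm_prod]
      rw [Finset.prod_congr rfl (fun β hβ =>
        max_eq_right (pnorm_one_le hq1 (Finset.mem_erase.mp hβ).1))]
      simp
    exact step1.trans (le_of_eq step2)
  -- choose maximizing α
  obtain ⟨α₀, hα₀V, hmax⟩ :=
    Finset.exists_max_image V (fun α => pnorm q (f.eval α)) ⟨0, h0V⟩
  set M := pnorm q (f.eval α₀) with hM
  have hM0 : 0 ≤ M := pnorm_nonneg _
  refine ⟨α₀, ?_, ?_⟩
  · -- pnorm α₀ ≤ d
    rcases eq_or_ne α₀ 0 with rfl | hα₀ne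
    · rw [pnorm_zero]; exact_mod_cast Nat.cast_nonneg d
    · have hdeg : α₀.natDegree < k := by
        rw [Polynomial.natDegree_lt_iff_degree_lt hα₀ne]
        exact (hmemV α₀).mp hα₀V
      have hdegL : α₀.natDegree ≤ L := by omega
      unfold pnorm
      rw [if_neg hα₀ne]
      calc (q:ℝ) ^ α₀.natDegree ≤ (q:ℝ) ^ L := pow_le_pow_right₀ hqR1 hdegL
        _ = ((q ^ L : ℕ) : ℝ) := by push_cast; ring
        _ ≤ (d : ℝ) := by exact_mod_cast Nat.pow_log_le_self q hd.ne'
  · intro i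
    have hco := congrArg (fun p => Polynomial.coeff p i) hid
    simp only [coeff_C_mul, finset_sum_coeff] at hco
    have hbound : pnorm q (Δ * f.coeff i) ≤ M * pnorm q Δ := by
      rw [hco]
      refine pnorm_sum_le hq1 _ _ (mul_nonneg hM0 (le_of_lt hΔpos)) ?_
      intro α hα
      rw [pnorm_mul]
      exact mul_le_mul (hmax α hα)
        ((pnorm_coeff_prod_le hq1 _ i).trans (hΔbound α hα))
        (pnorm_nonneg _) hM0
    rw [pnorm_mul, mul_comm] at hbound
    exact le_of_mul_le_mul_right hbound hΔpos
end

section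
/- Let A be an s × r matrix over F_q[t] with r > s and of full rank s, and let N = max_{i,j} deg A_{ij}. Let D be the greatest common divisor of all s × s subminors (maximal minors) of A. Then there exists a nonzero vector x = (x_1, ..., x_r) ∈ F_q[t]^r with A x = 0 and max_i deg x_i ≤ (s·N − deg D)/(r − s). -/
/-!
Induction on the degree of the gcd `D` of the maximal minors, carrying row-wise degree bounds
`deg A i j ≤ N i`. If `deg D = 0` (which includes `D = 0`) this is Siegel's counting argument:
the `K`-linear map `x ↦ A x` from vectors of polynomials of degree `≤ d` to vectors whose `i`-th
entry has degree `≤ N i + d` has a nontrivial kernel as soon as `r (d + 1) > s (d + 1) + ∑ N i`.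
Otherwise choose an irreducible `q ∣ D`. Modulo `q` all maximal minors vanish, so the rows of `A`
are dependent and some combination `u ᵥ* A` with `deg u i < deg q` is divisible by `q`.
Replacing the row `i` that maximises `deg u i + N i` by `(u ᵥ* A) / q` keeps the kernel inside that
of `A`, multiplies every maximal minor by `u i / q`, and lowers both `∑ N i` and `deg D` by
`deg q - deg u i > 0`, so the bound `(∑ N i - deg D) / (r - s)` is unchanged.
-/

open Polynomial Matrix Module

namespace Matrix

variable {m n R : Type*} [Fintype m] [DecidableEq m]

theorem det_updateRow_vecMul [CommRing R] (B : Matrix m m R) (i : m) (u : m → R) :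
    (B.updateRow i (u ᵥ* B)).det = u i * B.det := by
  rw [vecMul_eq_sum, det_updateRow_sum, smul_eq_mul]

theorem det_submatrix_updateRow_of_smul_eq_vecMul [CommRing R] {A : Matrix m n R} {i : m}
    {q : R} {u : m → R} {w : n → R} (hw : q • w = u ᵥ* A) (c : m ↪ n) :
    q * ((A.updateRow i w).submatrix id c).det = u i * (A.submatrix id c).det := by
  have hsub : (A.updateRow i w).submatrix id c = (A.submatrix id c).updateRow i (w ∘ c) := by
    ext k j
    rcases eq_or_ne k i with rfl | hk <;> simp [updateRow_apply, *]
  have hrow : q • (w ∘ c) = u ᵥ* A.submatrix id c := by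
    ext j
    simpa [vecMul, dotProduct] using congrFun hw (c j)
  rw [hsub, ← det_updateRow_smul, hrow, det_updateRow_vecMul]

theorem mulVec_eq_zero_of_updateRow_of_smul_eq_vecMul [CommRing R] [IsDomain R]
    [Fintype n] {A : Matrix m n R} {i : m} {q : R} {u : m → R} {w : n → R}
    (hw : q • w = u ᵥ* A) (hu : u i ≠ 0) {x : n → R} (hx : A.updateRow i w *ᵥ x = 0) :
    A *ᵥ x = 0 := by
  have hsingle : A *ᵥ x = Pi.single i ((A *ᵥ x) i) := by
    ext k
    rcases eq_or_ne k i with rfl | hk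
    · simp
    · simpa [mulVec, updateRow_ne hk, hk] using congrFun hx k
  have hi : u i * (A *ᵥ x) i = 0 := by
    calc u i * (A *ᵥ x) i = u ⬝ᵥ (A *ᵥ x) := by conv_rhs => rw [hsingle, dotProduct_single]
      _ = q * (A.updateRow i w *ᵥ x) i := by
          rw [dotProduct_mulVec, ← hw, smul_dotProduct]
          simp [mulVec]
      _ = 0 := by rw [hx, Pi.zero_apply, mul_zero]
  rw [hsingle, (mul_eq_zero.1 hi).resolve_left hu, Pi.single_zero]

theorem exists_det_submatrix_ne_zero_of_linearIndependent_row {K : Type*} [Field K] [Fintype n]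
    {M : Matrix m n K} (hM : LinearIndependent K M.row) :
    ∃ c : m ↪ n, (M.submatrix id c).det ≠ 0 := by
  obtain ⟨f, hf_col, -, hf_li⟩ := Submodule.exists_fun_fin_finrank_span_eq K (Set.range M.col)
  choose c hc using hf_col
  have hcard : Fintype.card m = finrank K (Submodule.span K (Set.range M.col)) := by
    rw [← rank_eq_finrank_span_cols, hM.rank_matrix]
  let e := Fintype.equivFinOfCardEq hcard
  have hfc : f = M.col ∘ c := funext fun i => (hc i).symm
  have hc_inj : Function.Injective c := .of_comp (hfc ▸ hf_li.injective)
  refine ⟨⟨c ∘ e, hc_inj.comp e.injective⟩, ?_⟩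
  have hcols : LinearIndependent K (M.submatrix id (c ∘ e)).col := by
    rw [show (M.submatrix id (c ∘ e)).col = f ∘ e by rw [hfc]; rfl]
    exact hf_li.comp e e.injective
  exact ((linearIndependent_cols_iff_isUnit.1 hcols).map detMonoidHom).ne_zero

theorem exists_vecMul_eq_zero_of_det_submatrix_eq_zero {K : Type*} [Field K] [Fintype n]
    (M : Matrix m n K) (hM : ∀ c : m ↪ n, (M.submatrix id c).det = 0) :
    ∃ g ≠ 0, g ᵥ* M = 0 := by
  have hdep : ¬ LinearIndependent K M.row := fun h =>
    (exists_det_submatrix_ne_zero_of_linearIndependent_row h).elim fun c hc => hc (hM c)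
  obtain ⟨g, hg, i, hi⟩ := Fintype.not_linearIndependent_iff.1 hdep
  exact ⟨g, fun h => hi (congrFun h i), by rw [vecMul_eq_sum]; exact hg⟩

variable [Fintype n] [CommRing R] [NormalizedGCDMonoid R]

noncomputable def maxMinorsGcd (A : Matrix m n R) : R :=
  Finset.univ.gcd fun c : m ↪ n => (A.submatrix id c).det

theorem maxMinorsGcd_dvd (A : Matrix m n R) (c : m ↪ n) :
    A.maxMinorsGcd ∣ (A.submatrix id c).det :=
  Finset.gcd_dvd (Finset.mem_univ c)

theorem associated_maxMinorsGcd {A : Matrix m n R} {D : R}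
    (hdvd : ∀ c : m ↪ n, D ∣ (A.submatrix id c).det)
    (hgcd : ∀ D' : R, (∀ c : m ↪ n, D' ∣ (A.submatrix id c).det) → D' ∣ D) :
    Associated D A.maxMinorsGcd :=
  associated_of_dvd_dvd (Finset.dvd_gcd fun c _ => hdvd c) (hgcd _ A.maxMinorsGcd_dvd)

theorem exists_det_submatrix_ne_zero_of_maxMinorsGcd_ne_zero {A : Matrix m n R}
    (h : A.maxMinorsGcd ≠ 0) : ∃ c : m ↪ n, (A.submatrix id c).det ≠ 0 := by
  by_contra! hall
  exact h (Finset.gcd_eq_zero_iff.2 fun c _ => hall c)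

theorem associated_maxMinorsGcd_updateRow {A : Matrix m n R} {i : m} {q : R} {u : m → R}
    {w : n → R} (hw : q • w = u ᵥ* A) :
    Associated (q * (A.updateRow i w).maxMinorsGcd) (u i * A.maxMinorsGcd) := by
  refine (Finset.gcd_mul_left' _ _ q).symm.trans ?_
  rw [Finset.gcd_congr rfl fun c _ => det_submatrix_updateRow_of_smul_eq_vecMul hw c]
  exact Finset.gcd_mul_left' _ _ _

end Matrix

namespace Polynomial

section

variable {m n R : Type*} [CommRing R]

theorem natDegree_det_le_sum [Fintype m] [DecidableEq m] (M : Matrix m m R[X]) (N : m → ℕ)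
    (hM : ∀ i j, (M i j).natDegree ≤ N i) : M.det.natDegree ≤ ∑ i, N i := by
  rw [det_apply']
  refine natDegree_sum_le_of_forall_le _ _ fun σ _ => ?_
  refine (natDegree_mul_le_of_le (natDegree_intCast _).le
    ((natDegree_prod_le _ _).trans (Finset.sum_le_sum fun i _ => hM (σ i) i))).trans ?_
  rw [zero_add, Equiv.sum_comp σ N]

theorem natDegree_maxMinorsGcd_le [Fintype m] [DecidableEq m] [Fintype n] [IsDomain R]
    [NormalizedGCDMonoid R[X]]
    (A : Matrix m n R[X]) (N : m → ℕ) (hA : ∀ i j, (A i j).natDegree ≤ N i) :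
    A.maxMinorsGcd.natDegree ≤ ∑ i, N i := by
  rcases eq_or_ne A.maxMinorsGcd 0 with h | h
  · simp [h]
  obtain ⟨c, hc⟩ := exists_det_submatrix_ne_zero_of_maxMinorsGcd_ne_zero h
  exact (natDegree_le_of_dvd (A.maxMinorsGcd_dvd c) hc).trans
    (natDegree_det_le_sum _ N fun i j => hA i (c j))

theorem natDegree_vecMul_le [Fintype m] (A : Matrix m n R[X]) (N : m → ℕ)
    (hA : ∀ i j, (A i j).natDegree ≤ N i) (u : m → R[X]) {B : ℕ}
    (hB : ∀ i, u i ≠ 0 → (u i).natDegree + N i ≤ B) (j : n) :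
    ((u ᵥ* A) j).natDegree ≤ B := by
  refine natDegree_sum_le_of_forall_le _ _ fun i _ => ?_
  rcases eq_or_ne (u i) 0 with hi | hi
  · simp [hi]
  · exact (natDegree_mul_le_of_le le_rfl (hA i j)).trans (hB i hi)

theorem natDegree_updateRow_le [DecidableEq m] {A : Matrix m n R[X]} {N : m → ℕ}
    (hA : ∀ i j, (A i j).natDegree ≤ N i) (i : m) {w : n → R[X]} {b : ℕ}
    (hw : ∀ j, (w j).natDegree ≤ b) (k : m) (j : n) :
    (A.updateRow i w k j).natDegree ≤ Function.update N i b k := by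
  rcases eq_or_ne k i with rfl | hk
  · simpa using hw j
  · simpa [hk] using hA k j

theorem natDegree_le_sub_of_natDegree_mul_le [IsDomain R] {p q : R[X]} {B : ℕ} (hq : q ≠ 0)
    (h : (q * p).natDegree ≤ B) : p.natDegree ≤ B - q.natDegree := by
  rcases eq_or_ne p 0 with rfl | hp
  · simp
  · rw [natDegree_mul hq hp] at h
    omega

end

variable {K m n : Type*} [Field K] [Fintype m] [Fintype n]

theorem finrank_degreeLT (d : ℕ) : finrank K (degreeLT K d) = d := by
  rw [finrank_eq_card_basis (degreeLT.basis K d), Fintype.card_fin]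

theorem mem_degreeLT_succ_iff {p : K[X]} {d : ℕ} :
    p ∈ degreeLT K (d + 1) ↔ p.natDegree ≤ d := by
  rw [degreeLT_succ_eq_degreeLE, mem_degreeLE, natDegree_le_iff_degree_le]

theorem exists_ne_zero_mulVec_eq_zero_natDegree_le (A : Matrix m n K[X]) (N : m → ℕ)
    (hA : ∀ i j, (A i j).natDegree ≤ N i) {d : ℕ}
    (hd : Fintype.card m * (d + 1) + ∑ i, N i < Fintype.card n * (d + 1)) :
    ∃ x ≠ 0, A *ᵥ x = 0 ∧ ∀ j, (x j).natDegree ≤ d := by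
  let V := degreeLT K (d + 1)
  have hmem (i : m) (y : n → V) : ∑ j, A i j * (y j : K[X]) ∈ degreeLT K (N i + d + 1) :=
    Submodule.sum_mem _ fun j _ => mem_degreeLT_succ_iff.2 <|
      natDegree_mul_le_of_le (hA i j) (mem_degreeLT_succ_iff.1 (y j).2)
  let f : (n → V) →ₗ[K] (i : m) → degreeLT K (N i + d + 1) := LinearMap.pi fun i =>
    LinearMap.codRestrict _ (∑ j, LinearMap.mulLeft K (A i j) ∘ₗ V.subtype ∘ₗ LinearMap.proj j)
      fun y => by simpa using hmem i y
  have hker : LinearMap.ker f ≠ ⊥ := LinearMap.ker_ne_bot_of_finrank_lt <| by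
    simp only [finrank_pi_fintype, finrank_degreeLT, V, Finset.sum_const, Finset.card_univ,
      smul_eq_mul, Finset.sum_add_distrib]
    linarith
  obtain ⟨y, hy, hy0⟩ := (Submodule.ne_bot_iff _).1 hker
  refine ⟨fun j => y j, fun h => hy0 (_root_.funext fun j => Subtype.ext (congrFun h j)), ?_,
    fun j => mem_degreeLT_succ_iff.1 (y j).2⟩
  funext i
  simpa [f, mulVec, dotProduct] using congrArg Subtype.val (congrFun (LinearMap.mem_ker.1 hy) i)

theorem exists_smul_eq_vecMul_of_dvd_det_submatrix [DecidableEq m] {q : K[X]}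
    (hq : Irreducible q) (A : Matrix m n K[X]) (hA : ∀ c : m ↪ n, q ∣ (A.submatrix id c).det) :
    ∃ u w, u ≠ 0 ∧ (∀ i, (u i).degree < q.degree) ∧ q • w = u ᵥ* A := by
  have := Fact.mk hq
  let π := AdjoinRoot.mk q
  obtain ⟨g, hg0, hg⟩ := exists_vecMul_eq_zero_of_det_submatrix_eq_zero (A.map π) fun c => by
    rw [submatrix_map, ← RingHom.mapMatrix_apply, ← RingHom.map_det]
    exact AdjoinRoot.mk_eq_zero.2 (hA c)
  choose v hv using fun i => AdjoinRoot.mk_surjective (g i)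
  have hπu : π ∘ (fun i => v i % q) = g := by
    funext i
    rw [Function.comp_apply, ← hv, AdjoinRoot.mk_eq_mk, EuclideanDomain.mod_eq_sub_mul_div]
    exact ⟨-(v i / q), by ring⟩
  have hdvd (j : n) : q ∣ ((fun i => v i % q) ᵥ* A) j := by
    rw [← AdjoinRoot.mk_eq_zero, RingHom.map_vecMul, hπu, hg, Pi.zero_apply]
  choose w hw using hdvd
  refine ⟨fun i => v i % q, w, fun h => hg0 ?_, fun i => degree_mod_lt _ hq.ne_zero,
    _root_.funext fun j => (hw j).symm⟩
  rw [← hπu, h]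
  ext; simp

theorem exists_smul_eq_vecMul_natDegree_le [DecidableEq m] {q : K[X]} (hq : Irreducible q)
    (A : Matrix m n K[X]) (N : m → ℕ) (hA : ∀ i j, (A i j).natDegree ≤ N i)
    (hqA : ∀ c : m ↪ n, q ∣ (A.submatrix id c).det) :
    ∃ i u w, u i ≠ 0 ∧ (u i).natDegree < q.natDegree ∧ q • w = u ᵥ* A ∧
      ∀ j, (q * w j).natDegree ≤ (u i).natDegree + N i := by
  classical
  obtain ⟨u, w, hu0, hudeg, hw⟩ := exists_smul_eq_vecMul_of_dvd_det_submatrix hq A hqA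
  have hsupp : ({i | u i ≠ 0} : Finset m).Nonempty := by
    obtain ⟨i, hi⟩ := Function.ne_iff.1 hu0
    exact ⟨i, by simpa using hi⟩
  obtain ⟨i, hi, hmax⟩ := Finset.exists_max_image _ (fun i => (u i).natDegree + N i) hsupp
  replace hi : u i ≠ 0 := by simpa using hi
  refine ⟨i, u, w, hi, natDegree_lt_natDegree hi (hudeg i), hw, fun j => ?_⟩
  rw [← smul_eq_mul, ← Pi.smul_apply, hw]
  exact natDegree_vecMul_le A N hA u (fun k hk => hmax k (by simpa using hk)) j

theorem exists_natDegree_maxMinorsGcd_lt [DecidableEq m] [NormalizedGCDMonoid K[X]]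
    (A : Matrix m n K[X]) (N : m → ℕ) (hA : ∀ i j, (A i j).natDegree ≤ N i)
    (hG : 0 < A.maxMinorsGcd.natDegree) :
    ∃ (A' : Matrix m n K[X]) (N' : m → ℕ), (∀ i j, (A' i j).natDegree ≤ N' i) ∧
      (∀ x, A' *ᵥ x = 0 → A *ᵥ x = 0) ∧
      A'.maxMinorsGcd.natDegree < A.maxMinorsGcd.natDegree ∧
      ∑ i, N' i + A.maxMinorsGcd.natDegree = ∑ i, N i + A'.maxMinorsGcd.natDegree := by
  have hG0 : A.maxMinorsGcd ≠ 0 := fun h => by simp [h] at hG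
  obtain ⟨q, hq, hqG⟩ := WfDvdMonoid.exists_irreducible_factor
    (fun hu => hG.ne' (natDegree_eq_zero_of_isUnit hu)) hG0
  obtain ⟨i, u, w, hui, hqu, hw, hwdeg⟩ :=
    exists_smul_eq_vecMul_natDegree_le hq A N hA fun c => hqG.trans (A.maxMinorsGcd_dvd c)
  set A' := A.updateRow i w
  have hassoc : Associated (q * A'.maxMinorsGcd) (u i * A.maxMinorsGcd) :=
    associated_maxMinorsGcd_updateRow hw
  have hG'0 : A'.maxMinorsGcd ≠ 0 := fun h =>
    mul_ne_zero hui hG0 (hassoc.eq_zero_iff.1 (by rw [h, mul_zero]))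
  have hdeg : q.natDegree + A'.maxMinorsGcd.natDegree =
      (u i).natDegree + A.maxMinorsGcd.natDegree := by
    rw [← natDegree_mul hq.ne_zero hG'0, ← natDegree_mul hui hG0]
    exact natDegree_eq_of_degree_eq (degree_eq_degree_of_associated hassoc)
  obtain ⟨c, hc⟩ := exists_det_submatrix_ne_zero_of_maxMinorsGcd_ne_zero hG'0
  obtain ⟨j, hj⟩ : ∃ j, w j ≠ 0 := by
    by_contra! h
    exact hc (det_eq_zero_of_row_eq_zero i fun k => by simp [A', h])
  have hq_le : q.natDegree ≤ (u i).natDegree + N i := by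
    have := hwdeg j
    rw [natDegree_mul hq.ne_zero hj] at this
    omega
  refine ⟨A', Function.update N i ((u i).natDegree + N i - q.natDegree),
    natDegree_updateRow_le hA i fun j =>
      natDegree_le_sub_of_natDegree_mul_le hq.ne_zero (hwdeg j),
    fun x hx => mulVec_eq_zero_of_updateRow_of_smul_eq_vecMul hw hui hx, by omega, ?_⟩
  have := Finset.sum_update_of_mem (Finset.mem_univ i) N ((u i).natDegree + N i - q.natDegree)
  have := Finset.sum_eq_add_sum_sdiff_singleton_of_mem (Finset.mem_univ i) N
  omega

theorem exists_ne_zero_mulVec_eq_zero_natDegree_le_div [DecidableEq m]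
    [NormalizedGCDMonoid K[X]]
    (hmn : Fintype.card m < Fintype.card n) (A : Matrix m n K[X]) (N : m → ℕ)
    (hA : ∀ i j, (A i j).natDegree ≤ N i) :
    ∃ x ≠ 0, A *ᵥ x = 0 ∧ ∀ j, (x j).natDegree ≤
      (∑ i, N i - A.maxMinorsGcd.natDegree) / (Fintype.card n - Fintype.card m) := by
  induction hd : A.maxMinorsGcd.natDegree using Nat.strong_induction_on generalizing A N with
  | _ d ih =>
  rcases Nat.eq_zero_or_pos d with rfl | hd0
  · refine exists_ne_zero_mulVec_eq_zero_natDegree_le A N hA ?_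
    obtain ⟨k, hk⟩ := Nat.exists_eq_add_of_lt hmn
    have := Nat.lt_mul_div_succ (∑ i, N i) (Nat.succ_pos k)
    rw [hk, Nat.sub_zero, show Fintype.card m + k + 1 - Fintype.card m = k + 1 by omega]
    nlinarith
  · obtain ⟨A', N', hA', hker, hlt, hsum⟩ :=
      exists_natDegree_maxMinorsGcd_lt A N hA (hd ▸ hd0)
    obtain ⟨x, hx0, hAx, hx⟩ := ih _ (hd ▸ hlt) A' N' hA' rfl
    refine ⟨x, hx0, hker x hAx, fun j => (hx j).trans_eq ?_⟩
    have := natDegree_maxMinorsGcd_le A' N' hA'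
    congr 1
    omega

end Polynomial

theorem stmt2_general {Fq : Type*} [Field Fq] (s r : ℕ) (hrs : s < r)
    (A : Matrix (Fin s) (Fin r) (Polynomial Fq))
    (N : ℕ) (hN : ∀ i j, (A i j).degree ≤ (N : ℕ))
    (D : Polynomial Fq)
    (hDdvd : ∀ c : Fin s ↪ Fin r, D ∣ (A.submatrix id c).det)
    (hDgcd : ∀ D' : Polynomial Fq, (∀ c : Fin s ↪ Fin r, D' ∣ (A.submatrix id c).det) → D' ∣ D) :
    ∃ x : Fin r → Polynomial Fq, x ≠ 0 ∧ A.mulVec x = 0 ∧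
      ∀ i, ((x i).natDegree : ℝ) ≤ ((s : ℝ) * N - D.natDegree) / (r - s) := by
  classical
  have hAN (i j) : (A i j).natDegree ≤ N := natDegree_le_of_degree_le (hN i j)
  have hD : D.natDegree = A.maxMinorsGcd.natDegree := natDegree_eq_of_degree_eq <|
    degree_eq_degree_of_associated (associated_maxMinorsGcd hDdvd hDgcd)
  have hDle : D.natDegree ≤ s * N := by
    simpa [hD] using natDegree_maxMinorsGcd_le A (fun _ => N) hAN
  obtain ⟨x, hx0, hAx, hx⟩ := exists_ne_zero_mulVec_eq_zero_natDegree_le_div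
    (by simpa using hrs) A (fun _ => N) hAN
  refine ⟨x, hx0, hAx, fun j => ?_⟩
  calc ((x j).natDegree : ℝ) ≤ ((s * N - D.natDegree) / (r - s) : ℕ) := by
        exact_mod_cast (by simpa [hD] using hx j)
    _ ≤ ((s * N - D.natDegree : ℕ) : ℝ) / ((r - s : ℕ) : ℝ) := Nat.cast_div_le
    _ = _ := by push_cast [hDle, hrs.le]; ring

/-- Thue–Siegel lemma over `F_q[t]`: if `A` is an `s × r` matrix over `F_q[t]` with `r > s`,
of full rank `s`, all of whose entries have degree at most `N`, and `D` is the gcd of the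
determinants of all `s × s` submatrices of `A` (obtained by choosing `s` of the `r` columns),
then there is a nonzero `x ∈ F_q[t]^r` with `Ax = 0` and
`deg x_i ≤ (s·N − deg D)/(r − s)` for all `i`. -/
theorem stmt2 {Fq : Type*} [Field Fq] (s r : ℕ) (hrs : s < r)
    (A : Matrix (Fin s) (Fin r) (Polynomial Fq)) (hrank : A.rank = s)
    (N : ℕ) (hN : ∀ i j, (A i j).degree ≤ (N : ℕ))
    (D : Polynomial Fq)
    (hDdvd : ∀ c : Fin s ↪ Fin r, D ∣ (A.submatrix id c).det)
    (hDgcd : ∀ D' : Polynomial Fq, (∀ c : Fin s ↪ Fin r, D' ∣ (A.submatrix id c).det) → D' ∣ D) :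
    ∃ x : Fin r → Polynomial Fq, x ≠ 0 ∧ A.mulVec x = 0 ∧
      ∀ i, ((x i).natDegree : ℝ) ≤ ((s : ℝ) * N - D.natDegree) / (r - s) :=
  stmt2_general s r hrs A N hN D hDdvd hDgcd
end

section
/- There is an absolute constant C such that for every prime power q and every positive integer k, the sum over all monic irreducible polynomials p ∈ F_q[t] of degree at most k of (deg p)/q^{deg p} satisfies |k − Σ_{deg p ≤ k} (deg p)/|p|| ≤ C·q^{−1/2}, where |p| = q^{deg p}. -/
/-!
`X ^ q ^ n - X` is the product of the distinct monic irreducibles whose degree divides `n`,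
which gives Gauss's formula `∑_{d ∣ n} d N_d = q ^ n` (`N_d` counts the monic irreducibles of
degree `d`). The proper divisors of `n` are at most `n / 2`, so
`q ^ n - 2 q ^ (n / 2) ≤ n N_n ≤ q ^ n`, and the degree-`n` part `n N_n / q ^ n` of the sum
differs from `1` by at most `2 q ^ (-n / 2)`. Summing this geometric series over `1 ≤ n ≤ k`
gives the bound with `C = 8`.
-/

open Polynomial

theorem Polynomial.finite_setOf_natDegree_le {R : Type*} [Semiring R] [Finite R] (n : ℕ) :
    {p : R[X] | p.natDegree ≤ n}.Finite := by
  refine Set.Finite.of_finite_image (f := fun p (i : Fin (n + 1)) => p.coeff i)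
    (Set.toFinite _) fun p hp r hr hpr => Polynomial.ext fun i => ?_
  by_cases hi : i ≤ n
  · exact congrFun hpr ⟨i, Nat.lt_succ_of_le hi⟩
  · rw [coeff_eq_zero_of_natDegree_lt (by simp at hp; omega),
      coeff_eq_zero_of_natDegree_lt (by simp at hr; omega)]

theorem Nat.sum_range_succ_pow_le_two_mul_pow {b : ℕ} (hb : 2 ≤ b) (m : ℕ) :
    ∑ i ∈ Finset.range (m + 1), b ^ i ≤ 2 * b ^ m := by
  induction m with
  | zero => simp
  | succ m ih =>
    rw [Finset.sum_range_succ, pow_succ]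
    linarith [Nat.mul_le_mul_left (b ^ m) hb]

theorem abs_natCast_sub_sum_Ico_le {a : ℕ → ℝ} {x : ℝ} (hx0 : 0 ≤ x) (hx : x ≤ 3 / 4)
    (ha : ∀ n, 1 ≤ n → a n ≤ 1 ∧ 1 - a n ≤ 2 * x ^ n) (k : ℕ) :
    |(k : ℝ) - ∑ n ∈ Finset.Ico 1 (k + 1), a n| ≤ 8 * x := by
  have hk : (k : ℝ) - ∑ n ∈ Finset.Ico 1 (k + 1), a n =
      ∑ n ∈ Finset.Ico 1 (k + 1), (1 - a n) := by
    simp [Finset.sum_sub_distrib]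
  rw [hk, abs_of_nonneg (Finset.sum_nonneg fun n hn =>
    sub_nonneg.2 (ha n (Finset.mem_Ico.1 hn).1).1)]
  calc ∑ n ∈ Finset.Ico 1 (k + 1), (1 - a n)
      ≤ 2 * ∑ n ∈ Finset.Ico 1 (k + 1), x ^ n := by
        rw [Finset.mul_sum]
        exact Finset.sum_le_sum fun n hn => (ha n (Finset.mem_Ico.1 hn).1).2
    _ ≤ 2 * (x ^ 1 / (1 - x)) := by
        gcongr
        exact geom_sum_Ico_le_of_lt_one hx0 (by linarith)
    _ ≤ 8 * x := by
        rw [pow_one, mul_div_assoc', div_le_iff₀ (by linarith)]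
        nlinarith

namespace FiniteField

open Finset UniqueFactorizationMonoid

noncomputable def monicIrreducibleOfDegree (K : Type*) [Field K] [Finite K] (n : ℕ) :
    Finset K[X] :=
  ((finite_setOf_natDegree_le n).subset
    fun (p : K[X]) (hp : p.Monic ∧ Irreducible p ∧ p.natDegree = n) => hp.2.2.le).toFinset

section
variable {K : Type*} [Field K]

theorem mem_monicIrreducibleOfDegree [Finite K] {n : ℕ} {p : K[X]} :
    p ∈ monicIrreducibleOfDegree K n ↔ p.Monic ∧ Irreducible p ∧ p.natDegree = n :=
  Set.Finite.mem_toFinset _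

theorem pairwise_disjoint_monicIrreducibleOfDegree [Finite K] :
    Pairwise (Function.onFun Disjoint (monicIrreducibleOfDegree K)) := fun _ _ hde =>
  disjoint_left.2 fun _ hd he =>
    hde <| (mem_monicIrreducibleOfDegree.1 hd).2.2.symm.trans
      (mem_monicIrreducibleOfDegree.1 he).2.2

theorem sum_biUnion_monicIrreducibleOfDegree [Finite K] [DecidableEq K] {M : Type*}
    [AddCommMonoid M] (s : Finset ℕ) (g : ℕ → M) :
    ∑ p ∈ s.biUnion (monicIrreducibleOfDegree K), g p.natDegree =
      ∑ d ∈ s, #(monicIrreducibleOfDegree K d) • g d := by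
  rw [sum_biUnion (pairwise_disjoint_monicIrreducibleOfDegree.set_pairwise _)]
  refine sum_congr rfl fun d _ => ?_
  rw [sum_congr rfl fun p hp => congrArg g (mem_monicIrreducibleOfDegree.1 hp).2.2, sum_const]

theorem coe_biUnion_Ico_monicIrreducibleOfDegree [Finite K] [DecidableEq K] (k : ℕ) :
    ↑((Ico 1 (k + 1)).biUnion (monicIrreducibleOfDegree K)) =
      {p : K[X] | p.Monic ∧ Irreducible p ∧ p.natDegree ≤ k} := by
  ext p
  simp only [Set.mem_ofPred_eq, coe_biUnion, Set.mem_iUnion, mem_coe, mem_Ico,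
    mem_monicIrreducibleOfDegree, Nat.lt_succ_iff]
  exact ⟨fun ⟨_, ⟨_, hk⟩, hm, hi, hd⟩ => ⟨hm, hi, hd ▸ hk⟩,
    fun ⟨hm, hi, hk⟩ => ⟨_, ⟨hi.natDegree_pos, hk⟩, hm, hi, rfl⟩⟩

variable [Fintype K]

local notation "q" => Fintype.card K

theorem separable_X_pow_card_pow_sub_X {n : ℕ} (hn : n ≠ 0) :
    (X ^ q ^ n - X : K[X]).Separable :=
  galois_poly_separable (ringChar K) _ <| (CharP.cast_eq_zero_iff K _ _).1 <| by
    rw [Nat.cast_pow, FiniteField.cast_card_eq_zero, zero_pow hn]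

theorem mem_normalizedFactors_X_pow_card_pow_sub_X [DecidableEq K] {n : ℕ} (hn : n ≠ 0)
    {p : K[X]} :
    p ∈ normalizedFactors (X ^ q ^ n - X : K[X]) ↔
      p.Monic ∧ Irreducible p ∧ p.natDegree ∣ n := by
  rw [Polynomial.mem_normalizedFactors_iff
    (X_pow_card_pow_sub_X_ne_zero K hn Fintype.one_lt_card), ← Nat.card_eq_fintype_card]
  exact ⟨fun ⟨hirr, hmonic, hdvd⟩ =>
      ⟨hmonic, hirr, hirr.natDegree_dvd_of_dvd_X_pow_card_pow_sub_X hdvd⟩,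
    fun ⟨hmonic, hirr, hdvd⟩ =>
      ⟨hirr, hmonic, hirr.natDegree_dvd_iff_dvd_X_pow_card_pow_sub_X.1 hdvd⟩⟩

theorem sum_divisors_mul_card_monicIrreducibleOfDegree {n : ℕ} (hn : n ≠ 0) :
    ∑ d ∈ n.divisors, d * #(monicIrreducibleOfDegree K d) = q ^ n := by
  classical
  set f : K[X] := X ^ q ^ n - X
  have hf : f ≠ 0 := X_pow_card_pow_sub_X_ne_zero K hn Fintype.one_lt_card
  have hnodup : (normalizedFactors f).Nodup :=
    (squarefree_iff_nodup_normalizedFactors hf).1 (separable_X_pow_card_pow_sub_X hn).squarefree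
  have hfactors :
      (normalizedFactors f).toFinset = n.divisors.biUnion (monicIrreducibleOfDegree K) := by
    ext p
    rw [Multiset.mem_toFinset, mem_normalizedFactors_X_pow_card_pow_sub_X hn]
    simp only [mem_biUnion, Nat.mem_divisors, mem_monicIrreducibleOfDegree]
    exact ⟨fun ⟨hm, hi, hd⟩ => ⟨_, ⟨hd, hn⟩, hm, hi, rfl⟩,
      fun ⟨_, ⟨hd, _⟩, hm, hi, he⟩ => ⟨hm, hi, he ▸ hd⟩⟩
  calc ∑ d ∈ n.divisors, d * #(monicIrreducibleOfDegree K d)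
      = ∑ p ∈ (normalizedFactors f).toFinset, p.natDegree := by
        rw [hfactors, sum_biUnion_monicIrreducibleOfDegree _ fun d => d]
        simp only [smul_eq_mul, mul_comm]
    _ = (normalizedFactors f).prod.natDegree := by
        rw [natDegree_multiset_prod_of_monic _ fun p hp =>
            ((Polynomial.mem_normalizedFactors_iff hf).1 hp).2.1,
          sum_eq_multiset_sum, Multiset.toFinset_val, hnodup.dedup]
    _ = f.natDegree := by
        conv_rhs => rw [← leadingCoeff_mul_prod_normalizedFactors f]
        rw [natDegree_C_mul (leadingCoeff_ne_zero.2 hf)]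
    _ = q ^ n := X_pow_card_pow_sub_X_natDegree_eq K hn Fintype.one_lt_card

theorem mul_card_monicIrreducibleOfDegree_le (n : ℕ) :
    n * #(monicIrreducibleOfDegree K n) ≤ q ^ n := by
  rcases eq_or_ne n 0 with rfl | hn
  · simp
  rw [← sum_divisors_mul_card_monicIrreducibleOfDegree hn]
  exact single_le_sum (f := fun d => d * #(monicIrreducibleOfDegree K d))
    (fun _ _ => Nat.zero_le _) (Nat.mem_divisors_self n hn)

theorem pow_le_mul_card_monicIrreducibleOfDegree_add {n : ℕ} (hn : n ≠ 0) :
    q ^ n ≤ n * #(monicIrreducibleOfDegree K n) + 2 * q ^ (n / 2) := by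
  have hproper : n.properDivisors ⊆ range (n / 2 + 1) := fun d hd => by
    obtain ⟨k, hk, rfl⟩ := (Nat.mem_properDivisors_iff_exists hn).1 hd
    rw [mem_range, Nat.lt_succ_iff, Nat.le_div_iff_mul_le two_pos]
    exact Nat.mul_le_mul_left d hk
  rw [← sum_divisors_mul_card_monicIrreducibleOfDegree hn,
    ← Nat.cons_self_properDivisors hn, sum_cons]
  gcongr
  calc ∑ d ∈ n.properDivisors, d * #(monicIrreducibleOfDegree K d)
      ≤ ∑ d ∈ range (n / 2 + 1), q ^ d :=
        (sum_le_sum fun d _ => mul_card_monicIrreducibleOfDegree_le d).trans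
          (sum_le_sum_of_subset hproper)
    _ ≤ 2 * q ^ (n / 2) := Nat.sum_range_succ_pow_le_two_mul_pow Fintype.one_lt_card _

theorem mul_card_monicIrreducibleOfDegree_div_pow_le_one (n : ℕ) :
    (n * #(monicIrreducibleOfDegree K n) : ℝ) / q ^ n ≤ 1 := by
  rw [div_le_one (by positivity)]
  exact_mod_cast mul_card_monicIrreducibleOfDegree_le n

theorem one_sub_mul_card_monicIrreducibleOfDegree_div_pow_le {n : ℕ} (hn : n ≠ 0) :
    1 - (n * #(monicIrreducibleOfDegree K n) : ℝ) / q ^ n ≤ 2 * (√q)⁻¹ ^ n := by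
  set s := √(q : ℝ)
  have hs : 1 ≤ s := Real.one_le_sqrt.2 (by exact_mod_cast Fintype.card_pos)
  have hq : (q : ℝ) = s ^ 2 := (Real.sq_sqrt (Nat.cast_nonneg _)).symm
  have hlower : (q : ℝ) ^ n ≤ n * #(monicIrreducibleOfDegree K n) + 2 * q ^ (n / 2) := by
    exact_mod_cast pow_le_mul_card_monicIrreducibleOfDegree_add hn
  have hhalf : (q : ℝ) ^ (n / 2) ≤ s ^ n := by
    rw [hq, ← pow_mul]
    exact pow_le_pow_right₀ hs (Nat.mul_div_le n 2)
  calc 1 - (n * #(monicIrreducibleOfDegree K n) : ℝ) / q ^ n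
      = ((q : ℝ) ^ n - n * #(monicIrreducibleOfDegree K n)) / q ^ n := by
        rw [sub_div, div_self (by positivity)]
    _ ≤ 2 * s ^ n / q ^ n := by
        gcongr
        linarith
    _ = 2 * s⁻¹ ^ n := by
        rw [hq, inv_pow]
        field_simp
        ring

end

end FiniteField

open FiniteField

/-- Mertens-type estimate over `F_q[t]`: there is an absolute constant `C` such that for
every finite field `F_q` and every `k ≥ 1`,
`|k − Σ_{p monic irreducible, deg p ≤ k} (deg p)/q^(deg p)| ≤ C·q^(−1/2)`. -/
theorem stmt8 : ∃ C : ℝ, 0 < C ∧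
    ∀ (Fq : Type) [Field Fq] [Fintype Fq], ∀ k : ℕ, 0 < k →
      |(k : ℝ) - ∑ᶠ p ∈ {p : Polynomial Fq | p.Monic ∧ Irreducible p ∧ p.natDegree ≤ k},
          ((p.natDegree : ℝ) / (Fintype.card Fq : ℝ) ^ p.natDegree)| ≤
        C * (Fintype.card Fq : ℝ) ^ (-(1 : ℝ) / 2) := by
  refine ⟨8, by norm_num, fun K _ _ k _ => ?_⟩
  classical
  set q := Fintype.card K
  have hx : (q : ℝ) ^ (-(1 : ℝ) / 2) = (√q)⁻¹ := by
    rw [neg_div, Real.rpow_neg (Nat.cast_nonneg _), Real.sqrt_eq_rpow]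
  have hx34 : (√(q : ℝ))⁻¹ ≤ 3 / 4 := by
    have hq : (2 : ℝ) ≤ q := by exact_mod_cast Fintype.one_lt_card
    rw [inv_le_comm₀ (by positivity) (by norm_num), Real.le_sqrt' (by norm_num)]
    linarith
  rw [← coe_biUnion_Ico_monicIrreducibleOfDegree, finsum_mem_coe_finset,
    sum_biUnion_monicIrreducibleOfDegree _ fun n => (n : ℝ) / q ^ n, hx]
  refine abs_natCast_sub_sum_Ico_le (by positivity) hx34 (fun n hn => ?_) k
  rw [nsmul_eq_mul, mul_div_assoc', mul_comm]
  exact ⟨mul_card_monicIrreducibleOfDegree_div_pow_le_one n,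
    one_sub_mul_card_monicIrreducibleOfDegree_div_pow_le (by omega)⟩
end
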